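/- Let A, B be C*-algebras, φ, ψ : A → B *-homomorphisms, and suppose that for every finite subset F ⊆ A, every ε > 0, and every contraction b ∈ B, there exists c ∈ B such that ‖b*ψ(a)b − c*φ(a)c‖ ≤ ε for all a ∈ F. Then for every closed two-sided ideal I of A, the closed ideal of B generated by ψ(I) is contained in the closed ideal of B generated by φ(I). -/

import Mathlib

/-!
For `a ∈ I` and a contraction `b`, the hypothesis makes `star b * ψ a * b` a limit of
compressions `star c * φ a * c`, which lie in the closed ideal `J` generated by `φ(I)`; so
`star b * ψ a * b ∈ J`. Letting `b = e` run through an increasing approximate unit of `B`,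
`star e * ψ a * e → ψ a`, hence `ψ a ∈ J` because `J` is closed.
-/

open Filter Topology

/-- The closed two-sided ideal generated by a set. -/
def genClosedIdeal {B : Type*} [NonUnitalCStarAlgebra B] (s : Set B) : TwoSidedIdeal B :=
  sInf {J : TwoSidedIdeal B | IsClosed (J : Set B) ∧ s ⊆ J}

section genClosedIdeal

variable {B : Type*} [NonUnitalCStarAlgebra B]

lemma isClosed_genClosedIdeal (s : Set B) : IsClosed (genClosedIdeal s : Set B) := by
  have hcoe : (genClosedIdeal s : Set B) =
      ⋂ J ∈ {J : TwoSidedIdeal B | IsClosed (J : Set B) ∧ s ⊆ J}, (J : Set B) := by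
    ext x
    simp [genClosedIdeal, TwoSidedIdeal.mem_sInf]
  rw [hcoe]
  exact isClosed_biInter fun J hJ => hJ.1

lemma subset_genClosedIdeal (s : Set B) : s ⊆ genClosedIdeal s :=
  fun _ hx => by
    rw [SetLike.mem_coe, genClosedIdeal, TwoSidedIdeal.mem_sInf]
    exact fun _ hJ => hJ.2 hx

lemma genClosedIdeal_le {s : Set B} {J : TwoSidedIdeal B} (hJ : IsClosed (J : Set B))
    (hs : s ⊆ J) : genClosedIdeal s ≤ J :=
  sInf_le ⟨hJ, hs⟩

end genClosedIdeal

lemma Filter.IsApproximateUnit.tendsto_mul_mul_self {A : Type*} [NonUnitalSeminormedRing A]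
    {l : Filter A} (hl : l.IsApproximateUnit) (hbdd : IsBoundedUnder (· ≤ ·) l (‖·‖))
    (x : A) : Tendsto (fun e => e * x * e) l (𝓝 x) := by
  have hleft : Tendsto (fun e => (e * x - x) * e) l (𝓝 0) :=
    (tendsto_sub_nhds_zero_iff.mpr (hl.tendsto_mul_right x)).zero_mul_isBoundedUnder_le hbdd
  simpa [sub_mul] using hleft.add (hl.tendsto_mul_left x)

lemma IsClosed.mem_of_forall_star_mul_mul_mem {B : Type*} [NonUnitalCStarAlgebra B]
    {J : Set B} (hJ : IsClosed J) {x : B} (hx : ∀ b : B, ‖b‖ ≤ 1 → star b * x * b ∈ J) :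
    x ∈ J := by
  let _ := CStarAlgebra.spectralOrder B
  have := CStarAlgebra.spectralOrderedRing B
  have hl := CStarAlgebra.increasingApproximateUnit B
  have htendsto : Tendsto (fun e => star e * x * e) (CStarAlgebra.approximateUnit B) (𝓝 x) :=
    (hl.tendsto_mul_mul_self (isBoundedUnder_of_eventually_le hl.eventually_norm) x).congr'
      (hl.eventually_star_eq.mono fun e he => by simp only [he])
  exact hJ.mem_of_tendsto htendsto (hl.eventually_norm.mono hx)

def ApproxDominates {A B : Type*} [NonUnitalSeminormedRing B] [Star B] (φ ψ : A → B) : Prop :=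
  ∀ (F : Finset A) (ε : ℝ), 0 < ε → ∀ b : B, ‖b‖ ≤ 1 →
    ∃ c : B, ∀ a ∈ F, ‖star b * ψ a * b - star c * φ a * c‖ ≤ ε

lemma ApproxDominates.star_mul_mul_mem_closure {A B : Type*} [NonUnitalSeminormedRing B] [Star B]
    {φ ψ : A → B} (h : ApproxDominates φ ψ) (a : A) {b : B} (hb : ‖b‖ ≤ 1) :
    star b * ψ a * b ∈ closure (Set.range fun c => star c * φ a * c) := by
  refine Metric.mem_closure_iff.mpr fun ε hε => ?_
  obtain ⟨c, hc⟩ := h {a} (ε / 2) (half_pos hε) b hb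
  refine ⟨_, ⟨c, rfl⟩, ?_⟩
  rw [dist_eq_norm]
  exact (hc a (Finset.mem_singleton_self a)).trans_lt (half_lt_self hε)

/-- If `φ` approximately 1-dominates `ψ` as ordinary `*`-homomorphisms, then
`I(ψ)(I) ⊆ I(φ)(I)` for every closed two-sided ideal `I` of `A`. -/
theorem ideal_le_of_approx_dominates {A B : Type*}
    [NonUnitalCStarAlgebra A] [NonUnitalCStarAlgebra B]
    (φ ψ : A →⋆ₙₐ[ℂ] B)
    (hdom : ∀ (F : Finset A) (ε : ℝ), 0 < ε → ∀ b : B, ‖b‖ ≤ 1 →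
      ∃ c : B, ∀ a ∈ F, ‖star b * ψ a * b - star c * φ a * c‖ ≤ ε) :
    ∀ I : TwoSidedIdeal A, IsClosed (I : Set A) →
      genClosedIdeal (ψ '' (I : Set A)) ≤ genClosedIdeal (φ '' (I : Set A)) := by
  intro I _
  set J := genClosedIdeal (φ '' (I : Set A))
  have hJ : IsClosed (J : Set B) := isClosed_genClosedIdeal _
  refine genClosedIdeal_le hJ ?_
  rintro _ ⟨a, ha, rfl⟩
  have hφa : φ a ∈ J := subset_genClosedIdeal _ ⟨a, ha, rfl⟩
  have hcompressions : Set.range (fun c => star c * φ a * c) ⊆ J := by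
    rintro _ ⟨c, rfl⟩
    exact J.mul_mem_right _ _ (J.mul_mem_left _ _ hφa)
  exact hJ.mem_of_forall_star_mul_mul_mem fun b hb =>
    closure_minimal hcompressions hJ (ApproxDominates.star_mul_mul_mem_closure hdom a hb)
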